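/- The polynomial module A_n = ℂ[t_1,…,t_n], viewed as a module over the zero-divergence Lie algebra S_n (n ≥ 2) via vector fields acting as differential operators, has a unique nonzero proper S_n-submodule, namely the constants ℂ·1; hence A_n/ℂ·1 is a simple S_n-module. -/

import Mathlib

set_option maxHeartbeats 1000000
set_option synthInstance.maxHeartbeats 1000000

open MvPolynomial TensorProduct

noncomputable section

/-- The polynomial algebra `A_n = ℂ[t_1,…,t_n]`. -/
abbrev Pn (n : ℕ) := MvPolynomial (Fin n) ℂ

/-- The Witt algebra `W_n = Der(ℂ[t_1,…,t_n])`. -/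
abbrev Wn (n : ℕ) := Derivation ℂ (Pn n) (Pn n)

/-- The divergence of the polynomial vector field `D = Σ_i D(t_i) ∂_i`. -/
def divg {n : ℕ} (D : Wn n) : Pn n := ∑ i, pderiv i (D (X i))

/-- `e_i ∈ ℤ^n`, the `i`-th standard basis vector. -/
def e' {n : ℕ} (i : Fin n) : Fin n → ℤ := Pi.single i 1

/-- the monomial `t^α` for `α ∈ ℤ_{≥0}^n` -/
def nmon {n : ℕ} (α : Fin n → ℕ) : Pn n := monomial (Finsupp.equivFunOnFinite.symm α) 1

/-- the monomial `t^β` for `β ∈ ℤ^n` (negative exponents truncated; only used where an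
accompanying scalar coefficient vanishes unless `β ≥ 0`). -/
def zmon {n : ℕ} (β : Fin n → ℤ) : Pn n := nmon (fun k => (β k).toNat)

/-- The vector field `t^α ∂_i`, as a derivation. -/
def tdDeriv {n : ℕ} (α : Fin n → ℕ) (i : Fin n) : Wn n :=
  mkDerivation ℂ (fun k => if k = i then nmon α else 0)

/-- `L_{ij}^α = t^α((1+α_j) t_i ∂_i − (1+α_i) t_j ∂_j)
  = (1+α_j) t^{α+e_i} ∂_i − (1+α_i) t^{α+e_j} ∂_j`, as a derivation. -/
def Lij {n : ℕ} (α : Fin n → ℤ) (i j : Fin n) : Wn n :=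
  mkDerivation ℂ (fun k =>
    if k = i then ((1 + α j : ℤ) : ℂ) • zmon (α + e' i)
    else if k = j then -(((1 + α i : ℤ) : ℂ) • zmon (α + e' j))
    else 0)

/-!
Partial derivatives are divergence free, so a subspace `N` invariant under `S_n` and not
contained in `ℂ·1` contains, after repeated differentiation, a non-constant `g` all of whose
partial derivatives are constants. If `∂_i g = c ≠ 0` and `j ≠ i`, the divergence-free field
`t_j ∂_i` sends `g` to `c t_j`, so `t_j ∈ N`. Finally, for `k ≠ j` the Hamiltonian field
`∂_k h ∂_j − ∂_j h ∂_k` is divergence free because partial derivatives commute, and it sends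
`t_j` to `∂_k h`, which is an arbitrary polynomial since `∂_k` is onto in characteristic zero.
-/

namespace MvPolynomial

variable {σ R K : Type*}

theorem pderiv_comm [CommRing R] (i j : σ) (f : MvPolynomial σ R) :
    pderiv i (pderiv j f) = pderiv j (pderiv i f) := by
  suffices ⁅pderiv i, pderiv j⁆ = (0 : Derivation R (MvPolynomial σ R) (MvPolynomial σ R)) by
    rw [← sub_eq_zero, ← Derivation.commutator_apply, this, Derivation.zero_apply]
  refine derivation_ext fun k => ?_
  classical
  simp [Derivation.commutator_apply, pderiv_X, Pi.single_apply, apply_ite]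

theorem pderiv_surjective [Field K] [CharZero K] (i : σ) :
    Function.Surjective (pderiv i : MvPolynomial σ K → MvPolynomial σ K) := by
  intro q
  induction q using MvPolynomial.induction_on' with
  | monomial s c =>
    refine ⟨monomial (s + Finsupp.single i 1) (c / (s i + 1)), ?_⟩
    rw [pderiv_monomial, add_tsub_cancel_right]
    congr 1
    simp only [Finsupp.coe_add, Pi.add_apply, Finsupp.single_eq_same, Nat.cast_add, Nat.cast_one]
    field_simp
  | add p q hp hq =>
    obtain ⟨f, rfl⟩ := hp
    obtain ⟨g, rfl⟩ := hq
    exact ⟨f + g, map_add _ _ _⟩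

theorem totalDegree_pderiv_le [CommSemiring R] (i : σ) (f : MvPolynomial σ R) :
    (pderiv i f).totalDegree ≤ f.totalDegree - 1 := by
  refine Finset.sup_le fun m hm => ?_
  have hm' : m + Finsupp.single i 1 ∈ f.support := by
    rw [mem_support_iff, coeff_pderiv] at hm
    exact mem_support_iff.mpr (left_ne_zero_of_mul hm)
  have := le_totalDegree hm'
  rw [Finsupp.sum_add_index' (fun _ => rfl) (fun _ _ _ => rfl),
    Finsupp.sum_single_index rfl] at this
  omega

theorem mem_span_one_iff_totalDegree_eq_zero [CommSemiring R] {f : MvPolynomial σ R} :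
    f ∈ Submodule.span R {1} ↔ f.totalDegree = 0 := by
  rw [Submodule.mem_span_singleton, totalDegree_eq_zero_iff_eq_C]
  constructor
  · rintro ⟨c, rfl⟩
    simp [smul_eq_C_mul]
  · intro h
    exact ⟨coeff 0 f, by rw [smul_eq_C_mul, mul_one, ← h]⟩

theorem exists_pderiv_ne_zero [CommSemiring R] [IsDomain R] [CharZero R]
    {f : MvPolynomial σ R} (hf : f ∉ Submodule.span R {1}) : ∃ i, pderiv i f ≠ 0 := by
  by_contra! h
  refine hf (mem_span_one_iff_totalDegree_eq_zero.mpr ((totalDegree_eq_zero_iff _ f).mpr ?_))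
  intro m hm i
  by_contra hi
  have := congr(coeff (m - Finsupp.single i 1) $(h i))
  rw [coeff_pderiv, tsub_add_cancel_of_le (Finsupp.single_le_iff.mpr (by omega))] at this
  simp only [Finsupp.coe_tsub, Pi.sub_apply, Finsupp.single_eq_same, coeff_zero, mul_eq_zero,
    mem_support_iff.mp hm, false_or] at this
  exact_mod_cast this

theorem exists_forall_pderiv_mem_span_one [CommSemiring R] {N : Submodule R (MvPolynomial σ R)}
    (hN : ∀ i, ∀ f ∈ N, pderiv i f ∈ N) {f : MvPolynomial σ R} (hf : f ∈ N)
    (hf1 : f ∉ Submodule.span R {1}) :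
    ∃ g ∈ N, g ∉ Submodule.span R {1} ∧ ∀ i, pderiv i g ∈ Submodule.span R {1} := by
  induction hd : f.totalDegree using Nat.strong_induction_on generalizing f with
  | _ d ih =>
    by_cases h : ∀ i, pderiv i f ∈ Submodule.span R {1}
    · exact ⟨f, hf, hf1, h⟩
    obtain ⟨i, hi⟩ := not_forall.mp h
    have hf0 := mt mem_span_one_iff_totalDegree_eq_zero.mpr hf1
    have := totalDegree_pderiv_le i f
    exact ih _ (by omega) (hN i f hf) hi rfl

end MvPolynomial

section DivergenceFree

variable {n : ℕ}

def IsDivFreeStable (N : Submodule ℂ (Pn n)) : Prop :=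
  ∀ D : Wn n, divg D = 0 → ∀ f ∈ N, D f ∈ N

theorem divg_sub (D E : Wn n) : divg (D - E) = divg D - divg E := by
  simp [divg, Finset.sum_sub_distrib]

theorem divg_smul_pderiv (p : Pn n) (i : Fin n) : divg (p • pderiv i) = pderiv i p := by
  simp [divg, pderiv_X, Pi.single_apply, apply_ite]

namespace IsDivFreeStable

variable {N : Submodule ℂ (Pn n)}

theorem mul_pderiv_mem (hN : IsDivFreeStable N) {p : Pn n} {i : Fin n} (hp : pderiv i p = 0)
    {f : Pn n} (hf : f ∈ N) : p * pderiv i f ∈ N :=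
  hN _ (by rw [divg_smul_pderiv, hp]) f hf

theorem pderiv_mem (hN : IsDivFreeStable N) (i : Fin n) {f : Pn n} (hf : f ∈ N) :
    pderiv i f ∈ N := by
  simpa using hN.mul_pderiv_mem pderiv_one hf

theorem eq_top_of_X_mem (hN : IsDivFreeStable N) {i j : Fin n} (hij : i ≠ j) (hX : X j ∈ N) :
    N = ⊤ := by
  refine eq_top_iff.mpr fun q _ => ?_
  obtain ⟨h, rfl⟩ := pderiv_surjective i q
  have hdiv : divg (pderiv i h • pderiv j - pderiv j h • pderiv i) = 0 := by
    rw [divg_sub, divg_smul_pderiv, divg_smul_pderiv, pderiv_comm, sub_self]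
  simpa [pderiv_X_of_ne hij.symm] using hN _ hdiv _ hX

theorem eq_top_of_notMem_span_one [Nontrivial (Fin n)] (hN : IsDivFreeStable N) {f : Pn n}
    (hf : f ∈ N) (hf1 : f ∉ Submodule.span ℂ {1}) : N = ⊤ := by
  obtain ⟨g, hg, hg1, hconst⟩ :=
    exists_forall_pderiv_mem_span_one (fun i _ => hN.pderiv_mem i) hf hf1
  obtain ⟨i, hi⟩ := exists_pderiv_ne_zero hg1
  obtain ⟨c, hc⟩ := Submodule.mem_span_singleton.mp (hconst i)
  obtain ⟨j, hji⟩ := exists_ne i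
  obtain ⟨k, hkj⟩ := exists_ne j
  have hc0 : c ≠ 0 := by rintro rfl; simp [← hc] at hi
  have hXj : c • X j ∈ N := by
    simpa [← hc] using hN.mul_pderiv_mem (pderiv_X_of_ne hji) hg
  exact hN.eq_top_of_X_mem hkj ((Submodule.smul_mem_iff N hc0).mp hXj)

end IsDivFreeStable

end DivergenceFree

/-- The polynomial module `A_n = ℂ[t_1,…,t_n]`, viewed as a module over
the zero-divergence Lie algebra `S_n` (`n ≥ 2`) with vector fields acting as derivations,
has a unique nonzero proper `S_n`-submodule, namely the constants `ℂ·1`; hence `A_n/ℂ·1`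
is a simple `S_n`-module. -/
theorem polynomials_unique_proper_submodule (n : ℕ) (hn : 2 ≤ n) :
    (∀ D : Wn n, divg D = 0 → ∀ f ∈ Submodule.span ℂ {(1 : Pn n)},
        D f ∈ Submodule.span ℂ {(1 : Pn n)}) ∧
    Submodule.span ℂ {(1 : Pn n)} ≠ ⊥ ∧ Submodule.span ℂ {(1 : Pn n)} ≠ ⊤ ∧
    (∀ N : Submodule ℂ (Pn n), (∀ D : Wn n, divg D = 0 → ∀ f ∈ N, D f ∈ N) →
      N ≠ ⊥ → N ≠ ⊤ → N = Submodule.span ℂ {(1 : Pn n)}) := by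
  have : Nontrivial (Fin n) := Fin.nontrivial_iff_two_le.mpr hn
  have hatom := nonzero_span_atom (K := ℂ) (1 : Pn n) one_ne_zero
  refine ⟨fun D _ f hf => ?_, hatom.1, fun htop => ?_, fun N hN hbot htop => ?_⟩
  · obtain ⟨c, rfl⟩ := Submodule.mem_span_singleton.mp hf
    simp
  · have hX := htop ▸ Submodule.mem_top (x := (X ⟨0, by omega⟩ : Pn n))
    rw [mem_span_one_iff_totalDegree_eq_zero, totalDegree_X] at hX
    exact one_ne_zero hX
  · refine (hatom.le_iff.mp fun f hf => ?_).resolve_left hbot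
    by_contra hf1
    exact htop (IsDivFreeStable.eq_top_of_notMem_span_one hN hf hf1)

end
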